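/- Let M = U ×_f V be a warped product whose metric g is super generalized recurrent (SGK_n) with associated 1-forms (Π, Φ, Ψ, Θ). If there exist smooth functions λ, μ on U such that T_{ab} = λ S̄_{ab} + μ ḡ_{ab}, then the base metric ḡ is super generalized recurrent (SGK_p), i.e. there exist 1-forms (Π', Φ', Ψ', Θ') on U × V such that R̄_{abcd,e} = Π'_e R̄_{abcd} + Φ'_e (S̄∧S̄)_{abcd} + Ψ'_e (ḡ∧S̄)_{abcd} + Θ'_e (ḡ∧ḡ)_{abcd} for all indices. -/

import Mathlib

noncomputable section

/-- Partial derivative of a scalar function along the `j`-th coordinate direction. -/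
def pd {k : ℕ} (F : (Fin k → ℝ) → ℝ) (j : Fin k) (x : Fin k → ℝ) : ℝ :=
  fderiv ℝ F x (Pi.single j 1)

/-- Christoffel symbols `Γ^i_{jl}` of a metric `h` with (pointwise) inverse `hinv`. -/
def Christoffel {k : ℕ} (h hinv : (Fin k → ℝ) → Fin k → Fin k → ℝ)
    (i j l : Fin k) (x : Fin k → ℝ) : ℝ :=
  (1 / 2) * ∑ r, hinv x i r *
    (pd (fun y => h y r l) j x + pd (fun y => h y j r) l x - pd (fun y => h y j l) r x)

/-- The (0,4) Riemann-Christoffel curvature tensor of `h`. -/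
def Riem {k : ℕ} (h hinv : (Fin k → ℝ) → Fin k → Fin k → ℝ)
    (x : Fin k → ℝ) (i j s l : Fin k) : ℝ :=
  ∑ r, h x i r *
    (pd (Christoffel h hinv r l j) s x - pd (Christoffel h hinv r s j) l x
      + (∑ t, Christoffel h hinv r s t x * Christoffel h hinv t l j x)
      - ∑ t, Christoffel h hinv r l t x * Christoffel h hinv t s j x)

/-- The Ricci tensor of `h`. -/
def Ric {k : ℕ} (h hinv : (Fin k → ℝ) → Fin k → Fin k → ℝ)
    (x : Fin k → ℝ) (j l : Fin k) : ℝ :=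
  ∑ i, ∑ s, hinv x i s * Riem h hinv x i j s l

/-- The scalar curvature of `h`. -/
def Scal {k : ℕ} (h hinv : (Fin k → ℝ) → Fin k → Fin k → ℝ) (x : Fin k → ℝ) : ℝ :=
  ∑ j, ∑ l, hinv x j l * Ric h hinv x j l

/-- Covariant derivative (w.r.t. the Levi-Civita connection of `h`) of a (0,4) tensor field. -/
def cov4 {k : ℕ} (h hinv : (Fin k → ℝ) → Fin k → Fin k → ℝ)
    (T : (Fin k → ℝ) → Fin k → Fin k → Fin k → Fin k → ℝ)
    (x : Fin k → ℝ) (i j s l m : Fin k) : ℝ :=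
  pd (fun y => T y i j s l) m x
    - (∑ r, Christoffel h hinv r m i x * T x r j s l)
    - (∑ r, Christoffel h hinv r m j x * T x i r s l)
    - (∑ r, Christoffel h hinv r m s x * T x i j r l)
    - ∑ r, Christoffel h hinv r m l x * T x i j s r

/-- Covariant derivative of a (0,2) tensor field. -/
def cov2 {k : ℕ} (h hinv : (Fin k → ℝ) → Fin k → Fin k → ℝ)
    (T : (Fin k → ℝ) → Fin k → Fin k → ℝ) (x : Fin k → ℝ) (i j m : Fin k) : ℝ :=
  pd (fun y => T y i j) m x
    - (∑ r, Christoffel h hinv r m i x * T x r j)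
    - ∑ r, Christoffel h hinv r m j x * T x i r

/-- Kulkarni-Nomizu product of two (0,2) tensors. -/
def KN {k : ℕ} (A E : (Fin k → ℝ) → Fin k → Fin k → ℝ)
    (x : Fin k → ℝ) (i j s l : Fin k) : ℝ :=
  A x i l * E x j s + A x j s * E x i l - A x i s * E x j l - A x j l * E x i s

/-- The Gaussian curvature tensor `G_{ijsl} = h_{il}h_{js} - h_{is}h_{jl}`. -/
def Gt {k : ℕ} (h : (Fin k → ℝ) → Fin k → Fin k → ℝ)
    (x : Fin k → ℝ) (i j s l : Fin k) : ℝ :=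
  h x i l * h x j s - h x i s * h x j l

/-- The conformal (Weyl) curvature tensor of a `k`-dimensional metric `h`. -/
def Weyl {k : ℕ} (h hinv : (Fin k → ℝ) → Fin k → Fin k → ℝ)
    (x : Fin k → ℝ) (i j s l : Fin k) : ℝ :=
  Riem h hinv x i j s l - (1 / ((k : ℝ) - 2)) * KN h (Ric h hinv) x i j s l
    + (Scal h hinv x / (2 * ((k : ℝ) - 1) * ((k : ℝ) - 2))) * KN h h x i j s l

/-- Recurrency condition at a point. -/
def Recur {k : ℕ} (h hinv : (Fin k → ℝ) → Fin k → Fin k → ℝ)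
    (piF : (Fin k → ℝ) → Fin k → ℝ) (x : Fin k → ℝ) : Prop :=
  ∀ i j s l m, cov4 h hinv (Riem h hinv) x i j s l m = piF x m * Riem h hinv x i j s l

/-- Hyper generalized recurrency condition at a point. -/
def HGK {k : ℕ} (h hinv : (Fin k → ℝ) → Fin k → Fin k → ℝ)
    (piF psiF : (Fin k → ℝ) → Fin k → ℝ) (x : Fin k → ℝ) : Prop :=
  ∀ i j s l m, cov4 h hinv (Riem h hinv) x i j s l m =
    piF x m * Riem h hinv x i j s l + psiF x m * KN h (Ric h hinv) x i j s l

/-- Weakly generalized recurrency condition at a point. -/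
def WGK {k : ℕ} (h hinv : (Fin k → ℝ) → Fin k → Fin k → ℝ)
    (piF phiF : (Fin k → ℝ) → Fin k → ℝ) (x : Fin k → ℝ) : Prop :=
  ∀ i j s l m, cov4 h hinv (Riem h hinv) x i j s l m =
    piF x m * Riem h hinv x i j s l
      + phiF x m * KN (Ric h hinv) (Ric h hinv) x i j s l

/-- Super generalized recurrency condition at a point. -/
def SGK {k : ℕ} (h hinv : (Fin k → ℝ) → Fin k → Fin k → ℝ)
    (piF phiF psiF thetaF : (Fin k → ℝ) → Fin k → ℝ) (x : Fin k → ℝ) : Prop :=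
  ∀ i j s l m, cov4 h hinv (Riem h hinv) x i j s l m =
    piF x m * Riem h hinv x i j s l
      + phiF x m * KN (Ric h hinv) (Ric h hinv) x i j s l
      + psiF x m * KN h (Ric h hinv) x i j s l
      + thetaF x m * KN h h x i j s l

/-- Base-point projection of a point of `M = U × V`. -/
def bpt {p q : ℕ} (z : Fin (p + q) → ℝ) : Fin p → ℝ := fun a => z (Fin.castAdd q a)

/-- Fiber-point projection of a point of `M = U × V`. -/
def fpt {p q : ℕ} (z : Fin (p + q) → ℝ) : Fin q → ℝ := fun a => z (Fin.natAdd p a)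

/-- Block-diagonal combination of a base tensor `A` and a fiber tensor `B` scaled by `c`. -/
def wPair {p q : ℕ} (A : (Fin p → ℝ) → Fin p → Fin p → ℝ)
    (B : (Fin q → ℝ) → Fin q → Fin q → ℝ) (c : (Fin p → ℝ) → ℝ)
    (z : Fin (p + q) → ℝ) (i j : Fin (p + q)) : ℝ :=
  Sum.elim
    (fun a => Sum.elim (fun b => A (bpt z) a b) (fun _ => (0 : ℝ)) (finSumFinEquiv.symm j))
    (fun a => Sum.elim (fun _ => (0 : ℝ)) (fun b => c (bpt z) * B (fpt z) a b)
      (finSumFinEquiv.symm j))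
    (finSumFinEquiv.symm i)

/-- The warped product metric `g = ḡ ⊕ f g̃`. -/
def wMet {p q : ℕ} (gbar : (Fin p → ℝ) → Fin p → Fin p → ℝ)
    (gtil : (Fin q → ℝ) → Fin q → Fin q → ℝ) (f : (Fin p → ℝ) → ℝ) :
    (Fin (p + q) → ℝ) → Fin (p + q) → Fin (p + q) → ℝ :=
  wPair gbar gtil f

/-- The inverse of the warped product metric. -/
def wMetInv {p q : ℕ} (gbinv : (Fin p → ℝ) → Fin p → Fin p → ℝ)
    (gtinv : (Fin q → ℝ) → Fin q → Fin q → ℝ) (f : (Fin p → ℝ) → ℝ) :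
    (Fin (p + q) → ℝ) → Fin (p + q) → Fin (p + q) → ℝ :=
  wPair gbinv gtinv fun x => (f x)⁻¹

/-- The set of points of `M = U × V` inside `ℝ^{p+q}`. -/
def Mset {p q : ℕ} (U : Set (Fin p → ℝ)) (V : Set (Fin q → ℝ)) : Set (Fin (p + q) → ℝ) :=
  {z | bpt z ∈ U ∧ fpt z ∈ V}

/-- The tensor `T_{ab} = -(1/(2f))(f_{a,b} - (1/(2f)) f_a f_b)`. -/
def Tten {p : ℕ} (gbar gbinv : (Fin p → ℝ) → Fin p → Fin p → ℝ) (f : (Fin p → ℝ) → ℝ)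
    (x : Fin p → ℝ) (a b : Fin p) : ℝ :=
  -(1 / (2 * f x)) *
    ((pd (fun y => pd f a y) b x - ∑ c, Christoffel gbar gbinv c b a x * pd f c x)
      - (1 / (2 * f x)) * pd f a x * pd f b x)

/-- `tr T = ḡ^{ab} T_{ab}`. -/
def trT {p : ℕ} (gbar gbinv : (Fin p → ℝ) → Fin p → Fin p → ℝ) (f : (Fin p → ℝ) → ℝ)
    (x : Fin p → ℝ) : ℝ :=
  ∑ a, ∑ b, gbinv x a b * Tten gbar gbinv f x a b

/-- `P = (1/(4f²)) ḡ^{ab} f_a f_b`. -/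
def Pw {p : ℕ} (gbinv : (Fin p → ℝ) → Fin p → Fin p → ℝ) (f : (Fin p → ℝ) → ℝ)
    (x : Fin p → ℝ) : ℝ :=
  (1 / (4 * f x ^ 2)) * ∑ a, ∑ b, gbinv x a b * pd f a x * pd f b x

/-- `Q = f((n-p-1)P - tr T)`, with `n - p = q`. -/
def Qw {p : ℕ} (q : ℕ) (gbar gbinv : (Fin p → ℝ) → Fin p → Fin p → ℝ)
    (f : (Fin p → ℝ) → ℝ) (x : Fin p → ℝ) : ℝ :=
  f x * (((q : ℝ) - 1) * Pw gbinv f x - trT gbar gbinv f x)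

/-! The base block of the warped metric and of its inverse depends only on the base point, so the
Christoffel symbols with three base indices are those of `ḡ` and `Γ^α_{bc} = 0`; consequently the
base components of the curvature tensor of `g` and of its covariant derivative are those of `ḡ`.
The only other input is the mixed curvature `R_{αaβb} = f g̃_{αβ} T_{ab}`, which gives
`S_{ab} = S̄_{ab} + (n - p) T_{ab} = (1 + (n - p)λ) S̄_{ab} + (n - p)μ ḡ_{ab}` on base indices.
Restricting the SGK identity of `g` to base indices and expanding the Kulkarni–Nomizu products of
this affine combination gives the SGK identity of `ḡ`. -/

open Finset

theorem sum_mul_eq_ite_comm {ι R : Type*} [Fintype ι] [DecidableEq ι] [CommRing R]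
    {M N : ι → ι → R} (h : ∀ a b, ∑ c, M a c * N c b = if a = b then 1 else 0) (a b : ι) :
    ∑ c, N a c * M c b = if a = b then 1 else 0 := by
  have hMN : Matrix.of M * Matrix.of N = 1 := by
    ext i j; simpa [Matrix.mul_apply, Matrix.one_apply] using h i j
  have hNM : Matrix.of N * Matrix.of M = 1 := mul_eq_one_comm.1 hMN
  simpa [Matrix.mul_apply, Matrix.one_apply] using congrFun (congrFun hNM a) b

section Calculus

variable {𝕜 E F G : Type*} [NontriviallyNormedField 𝕜]
  [NormedAddCommGroup E] [NormedSpace 𝕜 E] [NormedAddCommGroup F] [NormedSpace 𝕜 F]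
  [NormedAddCommGroup G] [NormedSpace 𝕜 G]

/-- If `φ ∘ L` were differentiable at `z`, then so would be `φ = (φ ∘ L) ∘ (z + R (· - L z))`
at `L z`: either the chain rule applies or both sides are `0`. -/
theorem fderiv_comp_of_rightInverse (L : E →L[𝕜] F) (R : F →L[𝕜] E)
    (hLR : Function.RightInverse R L) (φ : F → G) (z : E) :
    fderiv 𝕜 (φ ∘ L) z = (fderiv 𝕜 φ (L z)).comp L := by
  by_cases hφ : DifferentiableAt 𝕜 φ (L z)
  · rw [fderiv_comp z hφ L.differentiableAt, L.fderiv]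
  · have hφL : ¬DifferentiableAt 𝕜 (φ ∘ L) z := by
      intro hd
      refine hφ ?_
      have hsec : DifferentiableAt 𝕜 (fun x => z + R (x - L z)) (L z) := by fun_prop
      have hz : z + R (L z - L z) = z := by simp
      have h := (hz ▸ hd).comp (L z) hsec
      convert h using 1
      ext x
      simp only [Function.comp_apply, map_add, hLR (x - L z), add_sub_cancel]
    rw [fderiv_zero_of_not_differentiableAt hφ, fderiv_zero_of_not_differentiableAt hφL,
      ContinuousLinearMap.zero_comp]

end Calculus

lemma pd_eq_of_eqOn {k : ℕ} {S : Set (Fin k → ℝ)} {F G : (Fin k → ℝ) → ℝ} (hS : IsOpen S)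
    (hFG : Set.EqOn F G S) {z : Fin k → ℝ} (hz : z ∈ S) (j : Fin k) :
    pd F j z = pd G j z := by
  rw [pd, pd, (Filter.eventuallyEq_of_mem (hS.mem_nhds hz) hFG).fderiv_eq]

@[simp]
lemma pd_const {k : ℕ} (c : ℝ) (j : Fin k) (z : Fin k → ℝ) : pd (fun _ => c) j z = 0 := by
  simp [pd]

lemma pd_mul {k : ℕ} {F G : (Fin k → ℝ) → ℝ} {z : Fin k → ℝ}
    (hF : DifferentiableAt ℝ F z) (hG : DifferentiableAt ℝ G z) (j : Fin k) :
    pd (fun y => F y * G y) j z = pd F j z * G z + F z * pd G j z := by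
  simp only [pd, fderiv_fun_mul hF hG, add_apply, smul_apply, smul_eq_mul]
  ring

lemma pd_const_mul {k : ℕ} {F : (Fin k → ℝ) → ℝ} {z : Fin k → ℝ}
    (hF : DifferentiableAt ℝ F z) (c : ℝ) (j : Fin k) :
    pd (fun y => c * F y) j z = c * pd F j z := by
  simp [pd, fderiv_const_mul hF]

lemma pd_div {k : ℕ} {F G : (Fin k → ℝ) → ℝ} {z : Fin k → ℝ}
    (hF : DifferentiableAt ℝ F z) (hG : DifferentiableAt ℝ G z) (hGz : G z ≠ 0) (j : Fin k) :
    pd (fun y => F y / G y) j z = (pd F j z * G z - F z * pd G j z) / G z ^ 2 := by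
  have hinv : HasFDerivAt (fun y => (G y)⁻¹) (-(G z ^ 2)⁻¹ • fderiv ℝ G z) z :=
    (hasDerivAt_inv hGz).comp_hasFDerivAt z hG.hasFDerivAt
  simp only [div_eq_mul_inv]
  rw [pd_mul hF hinv.differentiableAt]
  simp only [pd, hinv.fderiv, smul_apply, smul_eq_mul]
  field_simp
  ring

lemma differentiableAt_pd {k : ℕ} {S : Set (Fin k → ℝ)} {F : (Fin k → ℝ) → ℝ} (hS : IsOpen S)
    (hF : ContDiffOn ℝ (⊤ : ℕ∞) F S) {z : Fin k → ℝ} (hz : z ∈ S) (j : Fin k) :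
    DifferentiableAt ℝ (pd F j) z := by
  have hF' : ContDiffAt ℝ 1 (fderiv ℝ F) z :=
    (hF.contDiffAt (hS.mem_nhds hz)).fderiv_right (by norm_cast)
  exact (hF'.differentiableAt one_ne_zero).clm_apply (differentiableAt_const _)

section Blocks

variable {p q : ℕ}

lemma castAdd_ne_natAdd (a : Fin p) (m : Fin q) : Fin.castAdd q a ≠ Fin.natAdd p m := by
  simp [Fin.ext_iff]; omega

def bptL (p q : ℕ) : (Fin (p + q) → ℝ) →L[ℝ] (Fin p → ℝ) :=
  ContinuousLinearMap.pi fun a => ContinuousLinearMap.proj (Fin.castAdd q a)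

def fptL (p q : ℕ) : (Fin (p + q) → ℝ) →L[ℝ] (Fin q → ℝ) :=
  ContinuousLinearMap.pi fun m => ContinuousLinearMap.proj (Fin.natAdd p m)

lemma exists_rightInverse_bptL :
    ∃ R : (Fin p → ℝ) →L[ℝ] (Fin (p + q) → ℝ), Function.RightInverse R (bptL p q) :=
  ⟨ContinuousLinearMap.pi (Fin.append ContinuousLinearMap.proj 0), fun x => by
    ext a; simp [bptL]⟩

lemma exists_rightInverse_fptL :
    ∃ R : (Fin q → ℝ) →L[ℝ] (Fin (p + q) → ℝ), Function.RightInverse R (fptL p q) :=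
  ⟨ContinuousLinearMap.pi (Fin.append 0 ContinuousLinearMap.proj), fun w => by
    ext m; simp [fptL]⟩

lemma pd_comp_bpt (F : (Fin p → ℝ) → ℝ) (z : Fin (p + q) → ℝ) (j : Fin (p + q)) :
    pd (fun y => F (bpt y)) j z = fderiv ℝ F (bpt z) (bptL p q (Pi.single j 1)) := by
  obtain ⟨R, hR⟩ := exists_rightInverse_bptL (p := p) (q := q)
  exact congrArg (· (Pi.single j 1)) (fderiv_comp_of_rightInverse _ R hR F z)

lemma pd_comp_fpt (F : (Fin q → ℝ) → ℝ) (z : Fin (p + q) → ℝ) (j : Fin (p + q)) :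
    pd (fun y => F (fpt y)) j z = fderiv ℝ F (fpt z) (fptL p q (Pi.single j 1)) := by
  obtain ⟨R, hR⟩ := exists_rightInverse_fptL (p := p) (q := q)
  exact congrArg (· (Pi.single j 1)) (fderiv_comp_of_rightInverse _ R hR F z)

@[simp]
lemma pd_comp_bpt_castAdd (F : (Fin p → ℝ) → ℝ) (z : Fin (p + q) → ℝ) (e : Fin p) :
    pd (fun y => F (bpt y)) (Fin.castAdd q e) z = pd F e (bpt z) := by
  rw [pd_comp_bpt, pd]
  congr 1
  ext a
  simp [bptL, Pi.single_apply]

@[simp]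
lemma pd_comp_bpt_natAdd (F : (Fin p → ℝ) → ℝ) (z : Fin (p + q) → ℝ) (m : Fin q) :
    pd (fun y => F (bpt y)) (Fin.natAdd p m) z = 0 := by
  rw [pd_comp_bpt]
  convert (fderiv ℝ F (bpt z)).map_zero
  ext a
  simp [bptL, castAdd_ne_natAdd]

@[simp]
lemma pd_comp_fpt_castAdd (F : (Fin q → ℝ) → ℝ) (z : Fin (p + q) → ℝ) (e : Fin p) :
    pd (fun y => F (fpt y)) (Fin.castAdd q e) z = 0 := by
  rw [pd_comp_fpt]
  convert (fderiv ℝ F (fpt z)).map_zero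
  ext m
  simp [fptL, (castAdd_ne_natAdd e m).symm]

@[simp]
lemma pd_entry_comp_bpt_castAdd {ι κ : Type*} (A : (Fin p → ℝ) → ι → κ → ℝ) (i : ι) (j : κ)
    (z : Fin (p + q) → ℝ) (e : Fin p) :
    pd (fun y => A (bpt y) i j) (Fin.castAdd q e) z = pd (fun x => A x i j) e (bpt z) :=
  pd_comp_bpt_castAdd (fun x => A x i j) z e

@[simp]
lemma pd_entry_comp_bpt_natAdd {ι κ : Type*} (A : (Fin p → ℝ) → ι → κ → ℝ) (i : ι) (j : κ)
    (z : Fin (p + q) → ℝ) (m : Fin q) :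
    pd (fun y => A (bpt y) i j) (Fin.natAdd p m) z = 0 :=
  pd_comp_bpt_natAdd (fun x => A x i j) z m

lemma pd_comp_bpt_mul_entry_comp_fpt_castAdd {ι κ : Type*} {F : (Fin p → ℝ) → ℝ}
    {B : (Fin q → ℝ) → ι → κ → ℝ} {z : Fin (p + q) → ℝ} (hF : DifferentiableAt ℝ F (bpt z))
    (hB : ∀ i j, DifferentiableAt ℝ (fun w => B w i j) (fpt z)) (i : ι) (j : κ) (e : Fin p) :
    pd (fun y => F (bpt y) * B (fpt y) i j) (Fin.castAdd q e) z
      = pd F e (bpt z) * B (fpt z) i j := by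
  have hFb : DifferentiableAt ℝ (fun y => F (bpt y)) z := hF.comp z (bptL p q).differentiableAt
  have hBf : DifferentiableAt ℝ (fun y => B (fpt y) i j) z :=
    (hB i j).comp z (fptL p q).differentiableAt
  simp [pd_mul hFb hBf, pd_comp_fpt_castAdd (fun w => B w i j)]

lemma isOpen_Mset {U : Set (Fin p → ℝ)} {V : Set (Fin q → ℝ)} (hU : IsOpen U) (hV : IsOpen V) :
    IsOpen (Mset U V) :=
  (hU.preimage (bptL p q).continuous).inter (hV.preimage (fptL p q).continuous)

end Blocks

section WarpedProduct

variable {p q : ℕ} {gbar gbinv : (Fin p → ℝ) → Fin p → Fin p → ℝ}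
  {gtil gtinv : (Fin q → ℝ) → Fin q → Fin q → ℝ} {f : (Fin p → ℝ) → ℝ}

@[simp]
lemma wMet_castAdd_castAdd (z : Fin (p + q) → ℝ) (a b : Fin p) :
    wMet gbar gtil f z (Fin.castAdd q a) (Fin.castAdd q b) = gbar (bpt z) a b := by
  simp [wMet, wPair]

@[simp]
lemma wMet_castAdd_natAdd (z : Fin (p + q) → ℝ) (a : Fin p) (m : Fin q) :
    wMet gbar gtil f z (Fin.castAdd q a) (Fin.natAdd p m) = 0 := by
  simp [wMet, wPair]

@[simp]
lemma wMet_natAdd_castAdd (z : Fin (p + q) → ℝ) (a : Fin p) (m : Fin q) :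
    wMet gbar gtil f z (Fin.natAdd p m) (Fin.castAdd q a) = 0 := by
  simp [wMet, wPair]

@[simp]
lemma wMet_natAdd_natAdd (z : Fin (p + q) → ℝ) (m l : Fin q) :
    wMet gbar gtil f z (Fin.natAdd p m) (Fin.natAdd p l) = f (bpt z) * gtil (fpt z) m l := by
  simp [wMet, wPair]

@[simp]
lemma wMetInv_castAdd_castAdd (z : Fin (p + q) → ℝ) (a b : Fin p) :
    wMetInv gbinv gtinv f z (Fin.castAdd q a) (Fin.castAdd q b) = gbinv (bpt z) a b := by
  simp [wMetInv, wPair]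

@[simp]
lemma wMetInv_castAdd_natAdd (z : Fin (p + q) → ℝ) (a : Fin p) (m : Fin q) :
    wMetInv gbinv gtinv f z (Fin.castAdd q a) (Fin.natAdd p m) = 0 := by
  simp [wMetInv, wPair]

@[simp]
lemma wMetInv_natAdd_castAdd (z : Fin (p + q) → ℝ) (a : Fin p) (m : Fin q) :
    wMetInv gbinv gtinv f z (Fin.natAdd p m) (Fin.castAdd q a) = 0 := by
  simp [wMetInv, wPair]

@[simp]
lemma wMetInv_natAdd_natAdd (z : Fin (p + q) → ℝ) (m l : Fin q) :
    wMetInv gbinv gtinv f z (Fin.natAdd p m) (Fin.natAdd p l)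
      = (f (bpt z))⁻¹ * gtinv (fpt z) m l := by
  simp [wMetInv, wPair]

lemma christoffel_wMet_castAdd (a b c : Fin p) :
    Christoffel (wMet gbar gtil f) (wMetInv gbinv gtinv f)
        (Fin.castAdd q a) (Fin.castAdd q b) (Fin.castAdd q c)
      = fun z => Christoffel gbar gbinv a b c (bpt z) := by
  ext z
  simp [Christoffel, Fin.sum_univ_add]

lemma christoffel_wMet_natAdd_castAdd_castAdd (γ : Fin q) (b c : Fin p) :
    Christoffel (wMet gbar gtil f) (wMetInv gbinv gtinv f)
        (Fin.natAdd p γ) (Fin.castAdd q b) (Fin.castAdd q c) = fun _ => 0 := by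
  ext z
  simp [Christoffel, Fin.sum_univ_add]

lemma riem_wMet_castAdd (z : Fin (p + q) → ℝ) (a b c d : Fin p) :
    Riem (wMet gbar gtil f) (wMetInv gbinv gtinv f) z
        (Fin.castAdd q a) (Fin.castAdd q b) (Fin.castAdd q c) (Fin.castAdd q d)
      = Riem gbar gbinv (bpt z) a b c d := by
  simp [Riem, Fin.sum_univ_add, christoffel_wMet_castAdd, christoffel_wMet_natAdd_castAdd_castAdd]

lemma cov4_riem_wMet_castAdd (z : Fin (p + q) → ℝ) (a b c d e : Fin p) :
    cov4 (wMet gbar gtil f) (wMetInv gbinv gtinv f)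
        (Riem (wMet gbar gtil f) (wMetInv gbinv gtinv f)) z
        (Fin.castAdd q a) (Fin.castAdd q b) (Fin.castAdd q c) (Fin.castAdd q d) (Fin.castAdd q e)
      = cov4 gbar gbinv (Riem gbar gbinv) (bpt z) a b c d e := by
  simp only [cov4, riem_wMet_castAdd, Fin.sum_univ_add, christoffel_wMet_castAdd,
    christoffel_wMet_natAdd_castAdd_castAdd, zero_mul, sum_const_zero, add_zero]
  rw [pd_comp_bpt_castAdd (fun x => Riem gbar gbinv x a b c d)]

section Fiber

variable {z : Fin (p + q) → ℝ} (hf : DifferentiableAt ℝ f (bpt z)) (hf0 : f (bpt z) ≠ 0)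
  (hgt : ∀ m l, DifferentiableAt ℝ (fun w => gtil w m l) (fpt z))
  (hgts : ∀ m l, gtil (fpt z) m l = gtil (fpt z) l m)
  (hgti : ∀ γ δ, ∑ ρ, gtinv (fpt z) γ ρ * gtil (fpt z) ρ δ = if γ = δ then 1 else 0)
include hf hf0 hgt hgti

include hgts in
lemma christoffel_wMet_natAdd_natAdd_castAdd (γ δ : Fin q) (c : Fin p) :
    Christoffel (wMet gbar gtil f) (wMetInv gbinv gtinv f)
        (Fin.natAdd p γ) (Fin.natAdd p δ) (Fin.castAdd q c) z
      = if γ = δ then pd f c (bpt z) / (2 * f (bpt z)) else 0 := by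
  simp [Christoffel, Fin.sum_univ_add, pd_comp_bpt_mul_entry_comp_fpt_castAdd hf hgt, hgts δ]
  calc _ = pd f c (bpt z) / (2 * f (bpt z)) * ∑ ρ, gtinv (fpt z) γ ρ * gtil (fpt z) ρ δ := by
        rw [mul_sum, mul_sum]; exact sum_congr rfl fun ρ _ => by field_simp
    _ = _ := by rw [hgti]; simp

lemma christoffel_wMet_natAdd_castAdd_natAdd (γ δ : Fin q) (c : Fin p) :
    Christoffel (wMet gbar gtil f) (wMetInv gbinv gtinv f)
        (Fin.natAdd p γ) (Fin.castAdd q c) (Fin.natAdd p δ) z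
      = if γ = δ then pd f c (bpt z) / (2 * f (bpt z)) else 0 := by
  simp [Christoffel, Fin.sum_univ_add, pd_comp_bpt_mul_entry_comp_fpt_castAdd hf hgt]
  calc _ = pd f c (bpt z) / (2 * f (bpt z)) * ∑ ρ, gtinv (fpt z) γ ρ * gtil (fpt z) ρ δ := by
        rw [mul_sum, mul_sum]; exact sum_congr rfl fun ρ _ => by field_simp
    _ = _ := by rw [hgti]; simp

end Fiber

section OpenSets

variable {U : Set (Fin p → ℝ)} {V : Set (Fin q → ℝ)} (hU : IsOpen U) (hV : IsOpen V)
  (hf : ContDiffOn ℝ (⊤ : ℕ∞) f U) (hf0 : ∀ x ∈ U, f x ≠ 0)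
  (hgt : ∀ m l, DifferentiableOn ℝ (fun w => gtil w m l) V)
  (hgts : ∀ w ∈ V, ∀ m l, gtil w m l = gtil w l m)
  (hgti : ∀ w ∈ V, ∀ γ δ, ∑ ρ, gtinv w γ ρ * gtil w ρ δ = if γ = δ then 1 else 0)
include hU hV hf hf0 hgt hgts hgti

lemma pd_christoffel_wMet_natAdd_natAdd_castAdd {z : Fin (p + q) → ℝ} (hz : z ∈ Mset U V)
    (ε δ : Fin q) (a b : Fin p) :
    pd (Christoffel (wMet gbar gtil f) (wMetInv gbinv gtinv f)
        (Fin.natAdd p ε) (Fin.natAdd p δ) (Fin.castAdd q a)) (Fin.castAdd q b) z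
      = if ε = δ then
          (pd (pd f a) b (bpt z) - pd f a (bpt z) * pd f b (bpt z) / f (bpt z)) / (2 * f (bpt z))
        else 0 := by
  have hΓ : Set.EqOn (Christoffel (wMet gbar gtil f) (wMetInv gbinv gtinv f)
        (Fin.natAdd p ε) (Fin.natAdd p δ) (Fin.castAdd q a))
      (fun y => if ε = δ then pd f a (bpt y) / (2 * f (bpt y)) else 0) (Mset U V) :=
    fun y hy => christoffel_wMet_natAdd_natAdd_castAdd
      ((hf.differentiableOn (by simp)).differentiableAt (hU.mem_nhds hy.1)) (hf0 _ hy.1)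
      (fun m l => (hgt m l).differentiableAt (hV.mem_nhds hy.2))
      (hgts _ hy.2) (hgti _ hy.2) ε δ a
  rw [pd_eq_of_eqOn (isOpen_Mset hU hV) hΓ hz]
  split_ifs
  · have hfz : f (bpt z) ≠ 0 := hf0 _ hz.1
    have hdf : DifferentiableAt ℝ f (bpt z) :=
      (hf.differentiableOn (by simp)).differentiableAt (hU.mem_nhds hz.1)
    rw [pd_comp_bpt_castAdd (fun x => pd f a x / (2 * f x)),
      pd_div (differentiableAt_pd hU hf hz.1 a) (hdf.const_mul 2) (by simpa),
      pd_const_mul hdf]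
    field_simp
  · exact pd_const 0 _ z

lemma riem_wMet_natAdd_castAdd_natAdd_castAdd {z : Fin (p + q) → ℝ} (hz : z ∈ Mset U V)
    (γ δ : Fin q) (a b : Fin p) :
    Riem (wMet gbar gtil f) (wMetInv gbinv gtinv f) z
        (Fin.natAdd p γ) (Fin.castAdd q a) (Fin.natAdd p δ) (Fin.castAdd q b)
      = f (bpt z) * gtil (fpt z) γ δ * Tten gbar gbinv f (bpt z) a b := by
  have hfz : f (bpt z) ≠ 0 := hf0 _ hz.1
  have hdf : DifferentiableAt ℝ f (bpt z) :=
    (hf.differentiableOn (by simp)).differentiableAt (hU.mem_nhds hz.1)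
  have hdgt : ∀ m l, DifferentiableAt ℝ (fun w => gtil w m l) (fpt z) :=
    fun m l => (hgt m l).differentiableAt (hV.mem_nhds hz.2)
  have hsum : ∑ c, pd f c (bpt z) / (2 * f (bpt z)) * Christoffel gbar gbinv c b a (bpt z)
      = (∑ c, Christoffel gbar gbinv c b a (bpt z) * pd f c (bpt z)) / (2 * f (bpt z)) := by
    rw [sum_div]; exact sum_congr rfl fun _ _ => by ring
  simp [Riem, Fin.sum_univ_add, christoffel_wMet_castAdd, christoffel_wMet_natAdd_castAdd_castAdd,
    christoffel_wMet_natAdd_natAdd_castAdd hdf hfz hdgt (hgts _ hz.2) (hgti _ hz.2),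
    christoffel_wMet_natAdd_castAdd_natAdd hdf hfz hdgt (hgti _ hz.2),
    pd_christoffel_wMet_natAdd_natAdd_castAdd hU hV hf hf0 hgt hgts hgti hz]
  rw [sum_eq_single δ (fun ε _ hε => by simp [hε]) (by simp)]
  simp only [↓reduceIte, hsum, Tten]
  field_simp
  ring

lemma ric_wMet_castAdd {z : Fin (p + q) → ℝ} (hz : z ∈ Mset U V) (a b : Fin p) :
    Ric (wMet gbar gtil f) (wMetInv gbinv gtinv f) z (Fin.castAdd q a) (Fin.castAdd q b)
      = Ric gbar gbinv (bpt z) a b + q * Tten gbar gbinv f (bpt z) a b := by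
  have hfz : f (bpt z) ≠ 0 := hf0 _ hz.1
  have hterm : ∀ γ δ, (f (bpt z))⁻¹ * gtinv (fpt z) γ δ
        * (f (bpt z) * gtil (fpt z) γ δ * Tten gbar gbinv f (bpt z) a b)
      = Tten gbar gbinv f (bpt z) a b * (gtinv (fpt z) γ δ * gtil (fpt z) δ γ) := fun γ δ => by
    rw [hgts _ hz.2 γ δ]; field_simp
  simp [Ric, Fin.sum_univ_add, riem_wMet_castAdd,
    riem_wMet_natAdd_castAdd_natAdd_castAdd hU hV hf hf0 hgt hgts hgti hz]
  simp only [hterm, ← mul_sum, hgti _ hz.2]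
  simp [mul_comm]

end OpenSets

end WarpedProduct

theorem base_of_warped_SGK_is_SGK_general
    {p q : ℕ}
    (U : Set (Fin p → ℝ)) (V : Set (Fin q → ℝ))
    (hU : IsOpen U) (hV : IsOpen V)
    (gbar gbinv : (Fin p → ℝ) → Fin p → Fin p → ℝ)
    (gtil gtinv : (Fin q → ℝ) → Fin q → Fin q → ℝ)
    (f : (Fin p → ℝ) → ℝ)
    (hgt : ∀ a b, ContDiffOn ℝ (⊤ : ℕ∞) (fun y => gtil y a b) V)
    (hgts : ∀ y ∈ V, ∀ a b, gtil y a b = gtil y b a)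
    (hgti : ∀ y ∈ V, ∀ a b, (∑ c, gtil y a c * gtinv y c b) = if a = b then (1 : ℝ) else 0)
    (hf : ContDiffOn ℝ (⊤ : ℕ∞) f U)
    (hfpos : ∀ x ∈ U, 0 < f x)
    (piF phiF psiF thetaF : (Fin (p + q) → ℝ) → Fin (p + q) → ℝ)
    (hsgk : ∀ z ∈ Mset U V, SGK (wMet gbar gtil f) (wMetInv gbinv gtinv f) piF phiF psiF thetaF z)
    (lam mu : (Fin p → ℝ) → ℝ)
    (hT : ∀ x ∈ U, ∀ a b, Tten gbar gbinv f x a b = lam x * Ric gbar gbinv x a b + mu x * gbar x a b) :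
    ∃ piB phiB psiB thetaB : (Fin (p + q) → ℝ) → Fin p → ℝ,
      ∀ z ∈ Mset U V, ∀ a b c d e : Fin p,
        cov4 gbar gbinv (Riem gbar gbinv) (bpt z) a b c d e =
          piB z e * Riem gbar gbinv (bpt z) a b c d
          + phiB z e * KN (Ric gbar gbinv) (Ric gbar gbinv) (bpt z) a b c d
          + psiB z e * KN gbar (Ric gbar gbinv) (bpt z) a b c d
          + thetaB z e * KN gbar gbar (bpt z) a b c d := by
  have hfne : ∀ x ∈ U, f x ≠ 0 := fun x hx => (hfpos x hx).ne'
  have hgtd : ∀ a b, DifferentiableOn ℝ (fun y => gtil y a b) V :=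
    fun a b => (hgt a b).differentiableOn (by simp)
  have hgti' := fun y hy => sum_mul_eq_ite_comm (hgti y hy)
  -- The base block of the Ricci tensor of `g` is `α S̄ + β ḡ` with `α = 1 + qλ`, `β = qμ`; the
  -- 1-forms below are read off from `KN (α S̄ + β ḡ) (α S̄ + β ḡ)` and `KN ḡ (α S̄ + β ḡ)`.
  refine ⟨fun z e => piF z (Fin.castAdd q e),
    fun z e => phiF z (Fin.castAdd q e) * (1 + q * lam (bpt z)) ^ 2,
    fun z e => (2 * phiF z (Fin.castAdd q e) * (q * mu (bpt z)) + psiF z (Fin.castAdd q e))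
      * (1 + q * lam (bpt z)),
    fun z e => (phiF z (Fin.castAdd q e) * (q * mu (bpt z)) + psiF z (Fin.castAdd q e))
      * (q * mu (bpt z)) + thetaF z (Fin.castAdd q e),
    fun z hz a b c d e => ?_⟩
  have hric : ∀ i j, Ric (wMet gbar gtil f) (wMetInv gbinv gtinv f) z
      (Fin.castAdd q i) (Fin.castAdd q j)
        = (1 + q * lam (bpt z)) * Ric gbar gbinv (bpt z) i j + q * mu (bpt z) * gbar (bpt z) i j :=
    fun i j => by
      rw [ric_wMet_castAdd hU hV hf hfne hgtd hgts hgti' hz, hT _ hz.1]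
      ring
  have hs := hsgk z hz (Fin.castAdd q a) (Fin.castAdd q b) (Fin.castAdd q c) (Fin.castAdd q d)
    (Fin.castAdd q e)
  rw [cov4_riem_wMet_castAdd, riem_wMet_castAdd] at hs
  simp only [KN, hric, wMet_castAdd_castAdd] at hs ⊢
  rw [hs]
  ring

/-- Corollary 4.1(i): if T is a linear combination of the Ricci tensor and metric of the base,
then the base of a warped product SGK manifold is itself SGK. -/
theorem base_of_warped_SGK_is_SGK
    {p q : ℕ} (hp : 1 ≤ p) (hq : 1 ≤ q)
    (U : Set (Fin p → ℝ)) (V : Set (Fin q → ℝ))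
    (hU : IsOpen U) (hV : IsOpen V)
    (gbar gbinv : (Fin p → ℝ) → Fin p → Fin p → ℝ)
    (gtil gtinv : (Fin q → ℝ) → Fin q → Fin q → ℝ)
    (f : (Fin p → ℝ) → ℝ)
    (hgb : ∀ a b, ContDiffOn ℝ (⊤ : ℕ∞) (fun x => gbar x a b) U)
    (hgbs : ∀ x ∈ U, ∀ a b, gbar x a b = gbar x b a)
    (hgbi : ∀ x ∈ U, ∀ a b, (∑ c, gbar x a c * gbinv x c b) = if a = b then (1 : ℝ) else 0)
    (hgt : ∀ a b, ContDiffOn ℝ (⊤ : ℕ∞) (fun y => gtil y a b) V)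
    (hgts : ∀ y ∈ V, ∀ a b, gtil y a b = gtil y b a)
    (hgti : ∀ y ∈ V, ∀ a b, (∑ c, gtil y a c * gtinv y c b) = if a = b then (1 : ℝ) else 0)
    (hf : ContDiffOn ℝ (⊤ : ℕ∞) f U)
    (hfpos : ∀ x ∈ U, 0 < f x)
    (piF phiF psiF thetaF : (Fin (p + q) → ℝ) → Fin (p + q) → ℝ)
    (hpiF : ∀ m, ContDiffOn ℝ (⊤ : ℕ∞) (fun z => piF z m) (Mset U V))
    (hphiF : ∀ m, ContDiffOn ℝ (⊤ : ℕ∞) (fun z => phiF z m) (Mset U V))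
    (hpsiF : ∀ m, ContDiffOn ℝ (⊤ : ℕ∞) (fun z => psiF z m) (Mset U V))
    (hthetaF : ∀ m, ContDiffOn ℝ (⊤ : ℕ∞) (fun z => thetaF z m) (Mset U V))
    (hsgk : ∀ z ∈ Mset U V, SGK (wMet gbar gtil f) (wMetInv gbinv gtinv f) piF phiF psiF thetaF z)
    (lam mu : (Fin p → ℝ) → ℝ)
    (hlam : ContDiffOn ℝ (⊤ : ℕ∞) lam U) (hmu : ContDiffOn ℝ (⊤ : ℕ∞) mu U)
    (hT : ∀ x ∈ U, ∀ a b, Tten gbar gbinv f x a b = lam x * Ric gbar gbinv x a b + mu x * gbar x a b) :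
    ∃ piB phiB psiB thetaB : (Fin (p + q) → ℝ) → Fin p → ℝ,
      ∀ z ∈ Mset U V, ∀ a b c d e : Fin p,
        cov4 gbar gbinv (Riem gbar gbinv) (bpt z) a b c d e =
          piB z e * Riem gbar gbinv (bpt z) a b c d
          + phiB z e * KN (Ric gbar gbinv) (Ric gbar gbinv) (bpt z) a b c d
          + psiB z e * KN gbar (Ric gbar gbinv) (bpt z) a b c d
          + thetaB z e * KN gbar gbar (bpt z) a b c d :=
  base_of_warped_SGK_is_SGK_general U V hU hV gbar gbinv gtil gtinv f hgt hgts hgti hf hfpos piF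
    phiF psiF thetaF hsgk lam mu hT
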